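/- If X ~ ESGT(θ, σ, ε, α, q) and r is a positive even integer with qα > r, then E[(X−θ)^r] = 2^{r/2−1} q^{r/α} σ^r Γ((r+1)/α) Γ(q − r/α) [(1−ε)^{r+1} + (1+ε)^{r+1}] / (Γ(1/α) Γ(q)). -/

import Mathlib

open Real MeasureTheory

/-- The Beta function. -/
noncomputable def betaFn (a b : ℝ) : ℝ := Real.Gamma a * Real.Gamma b / Real.Gamma (a + b)

/-- The ESGT density. -/
noncomputable def esgtPDF (θ σ ε α q : ℝ) (x : ℝ) : ℝ :=
  α / (2 * Real.sqrt 2 * betaFn (1 / α) q * q ^ (1 / α) * σ) *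
    (1 + |x - θ| ^ α /
        ((2 : ℝ) ^ (α / 2) * (1 - (if x < θ then (-1 : ℝ) else 1) * ε) ^ α * q * σ ^ α)) ^
      (-((α * q + 1) / α))

/-!
Centre at `θ` and split the integral at `0`. On the right half-line the density is a multiple
of `(1 + y ^ α / c) ^ (-(q + 1 / α))` with `c = 2 ^ (α / 2) (1 - ε) ^ α q σ ^ α`, and the
substitution `y = (c u) ^ (1 / α)` turns the `r`-th moment of that half into
`c ^ ((r + 1) / α) / α · B((r + 1) / α, q - r / α)`, by the half-line form
`∫₀^∞ u ^ (a - 1) (1 + u) ^ (-(a + b)) du = B(a, b)` of the Beta integral.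
Since `r` is even, the left half is the right half with `ε` replaced by `-ε`.
-/

open Set

theorem integral_rpow_mul_one_sub_rpow_eq_betaFn {a b : ℝ} (ha : 0 < a) (hb : 0 < b) :
    ∫ x in (0 : ℝ)..1, x ^ (a - 1) * (1 - x) ^ (b - 1) = betaFn a b := by
  have hcomplex : Complex.betaIntegral a b =
      ↑(∫ x in (0 : ℝ)..1, x ^ (a - 1) * (1 - x) ^ (b - 1)) := by
    rw [Complex.betaIntegral, ← intervalIntegral.integral_ofReal]
    refine intervalIntegral.integral_congr fun x hx => ?_
    rw [uIcc_of_le zero_le_one] at hx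
    push_cast
    rw [Complex.ofReal_cpow hx.1, Complex.ofReal_cpow (sub_nonneg.2 hx.2)]
    push_cast
    rfl
  rw [show betaFn a b = ProbabilityTheory.beta a b from rfl,
    ProbabilityTheory.beta_eq_betaIntegralReal a b ha hb, hcomplex, Complex.ofReal_re]

theorem image_div_one_sub_Ioo : (fun t : ℝ => t / (1 - t)) '' Ioo 0 1 = Ioi 0 := by
  ext u
  refine ⟨?_, fun hu => ⟨u / (1 + u), ?_, ?_⟩⟩
  · rintro ⟨t, ⟨ht₀, ht₁⟩, rfl⟩
    exact div_pos ht₀ (sub_pos.2 ht₁)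
  · have hu : (0 : ℝ) < u := hu
    exact ⟨by positivity, (div_lt_one (by positivity)).2 (by linarith)⟩
  · have hu : (0 : ℝ) < u := hu
    field_simp
    ring

theorem injOn_div_one_sub : InjOn (fun t : ℝ => t / (1 - t)) (Ioo 0 1) := by
  intro s hs t ht hst
  have hs₁ : 1 - s ≠ 0 := (sub_pos.2 hs.2).ne'
  have ht₁ : 1 - t ≠ 0 := (sub_pos.2 ht.2).ne'
  field_simp at hst
  linarith

theorem integral_Ioi_rpow_mul_one_add_rpow_eq_betaFn {a b : ℝ} (ha : 0 < a) (hb : 0 < b) :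
    ∫ u in Ioi 0, u ^ (a - 1) * (1 + u) ^ (-(a + b)) = betaFn a b := by
  have hderiv : ∀ t ∈ Ioo (0 : ℝ) 1,
      HasDerivWithinAt (fun t : ℝ => t / (1 - t)) ((1 - t) ^ (-2 : ℝ)) (Ioo 0 1) t := by
    intro t ht
    have ht₁ : 0 < 1 - t := sub_pos.2 ht.2
    refine (((hasDerivAt_id t).div ((hasDerivAt_const t 1).sub (hasDerivAt_id t))
      ht₁.ne').congr_deriv ?_).hasDerivWithinAt
    rw [rpow_neg ht₁.le, rpow_two]
    simp
  rw [← image_div_one_sub_Ioo, integral_image_eq_integral_abs_deriv_smul measurableSet_Ioo hderiv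
    injOn_div_one_sub, ← integral_rpow_mul_one_sub_rpow_eq_betaFn ha hb,
    intervalIntegral.integral_of_le zero_le_one, integral_Ioc_eq_integral_Ioo]
  refine setIntegral_congr_fun measurableSet_Ioo fun t ⟨ht₀, ht₁⟩ => ?_
  have ht₁ : 0 < 1 - t := sub_pos.2 ht₁
  have hsum : 1 + t / (1 - t) = (1 - t)⁻¹ := by field_simp; ring
  simp only [smul_eq_mul, abs_of_pos (rpow_pos_of_pos ht₁ _), hsum, div_rpow ht₀.le ht₁.le,
    inv_rpow ht₁.le, ← rpow_neg ht₁.le, neg_neg]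
  rw [show (1 - t) ^ (a + b) = (1 - t) ^ (a - 1) * ((1 - t) ^ (2 : ℝ) * (1 - t) ^ (b - 1)) by
    rw [← rpow_add ht₁, ← rpow_add ht₁]; ring_nf]
  have : (1 - t) ^ (a - 1) ≠ 0 := (rpow_pos_of_pos ht₁ _).ne'
  rw [rpow_neg ht₁.le]
  field_simp

theorem integral_Ioi_rpow_mul_one_add_div_rpow {a b c : ℝ} (ha : 0 < a) (hb : 0 < b)
    (hc : 0 < c) :
    ∫ x in Ioi 0, x ^ (a - 1) * (1 + x / c) ^ (-(a + b)) = c ^ a * betaFn a b := by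
  have hscale := integral_comp_mul_left_Ioi (fun x => x ^ (a - 1) * (1 + x / c) ^ (-(a + b))) 0 hc
  rw [mul_zero, smul_eq_mul, eq_inv_mul_iff_mul_eq₀ hc.ne'] at hscale
  rw [← hscale, ← integral_Ioi_rpow_mul_one_add_rpow_eq_betaFn ha hb, ← integral_const_mul,
    ← integral_const_mul]
  refine setIntegral_congr_fun measurableSet_Ioi fun u (hu : 0 < u) => ?_
  rw [mul_div_cancel_left₀ u hc.ne', mul_rpow hc.le hu.le, ← mul_assoc, ← mul_assoc,
    ← rpow_one_add' hc.le (by linarith)]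
  ring_nf

theorem integral_Ioi_rpow_mul_one_add_rpow_div_rpow {α c s p : ℝ} (hα : 0 < α) (hc : 0 < c)
    (hs : -1 < s) (hsp : (s + 1) / α < p) :
    ∫ y in Ioi 0, y ^ s * (1 + y ^ α / c) ^ (-p) =
      c ^ ((s + 1) / α) / α * betaFn ((s + 1) / α) (p - (s + 1) / α) := by
  have ha : 0 < (s + 1) / α := div_pos (by linarith) hα
  rw [div_mul_eq_mul_div, ← integral_Ioi_rpow_mul_one_add_div_rpow ha (sub_pos.2 hsp) hc,
    ← integral_div, add_sub_cancel, ← integral_comp_rpow_Ioi_of_pos (one_div_pos.2 hα)]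
  refine setIntegral_congr_fun measurableSet_Ioi fun x (hx : 0 < x) => ?_
  rw [smul_eq_mul, ← rpow_mul hx.le, ← rpow_mul hx.le, one_div_mul_cancel hα.ne', rpow_one,
    show (s + 1) / α - 1 = (1 / α - 1) + 1 / α * s by ring, rpow_add hx]
  ring

theorem integral_eq_integral_Ioi_add_integral_Ioi_neg {E : Type*} [NormedAddCommGroup E]
    [NormedSpace ℝ E] {f : ℝ → E} (hIic : IntegrableOn f (Iic 0)) (hIoi : IntegrableOn f (Ioi 0)) :
    ∫ x, f x = (∫ x in Ioi 0, f x) + ∫ x in Ioi 0, f (-x) := by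
  rw [← intervalIntegral.integral_Iic_add_Ioi hIic hIoi, add_comm, integral_comp_neg_Ioi, neg_zero]

noncomputable def esgtScale (σ α q d : ℝ) : ℝ := 2 ^ (α / 2) * d ^ α * q * σ ^ α

section ESGT

variable {θ σ ε α q : ℝ}

theorem esgtPDF_sub {y : ℝ} (hy : y ≠ 0) :
    esgtPDF θ σ ε α q (θ - y) = esgtPDF θ σ (-ε) α q (θ + y) := by
  rcases hy.lt_or_gt with hy | hy <;>
    simp [esgtPDF, hy, hy.not_gt, abs_neg, sub_eq_add_neg]

theorem esgtPDF_add {y : ℝ} (hy : 0 ≤ y) :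
    esgtPDF θ σ ε α q (θ + y) = α / (2 * √2 * betaFn (1 / α) q * q ^ (1 / α) * σ) *
      (1 + y ^ α / esgtScale σ α q (1 - ε)) ^ (-((α * q + 1) / α)) := by
  simp [esgtPDF, esgtScale, hy.not_gt, abs_of_nonneg hy]

theorem esgtScale_pos {d : ℝ} (hσ : 0 < σ) (hq : 0 < q) (hd : 0 < d) : 0 < esgtScale σ α q d := by
  unfold esgtScale
  positivity

theorem esgtScale_rpow_div {d : ℝ} (hσ : 0 < σ) (hα : 0 < α) (hq : 0 < q) (hd : 0 < d) (t : ℝ) :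
    esgtScale σ α q d ^ (t / α) = 2 ^ (t / 2) * d ^ t * q ^ (t / α) * σ ^ t := by
  have h2 : (0 : ℝ) < 2 ^ (α / 2) := by positivity
  rw [esgtScale, mul_rpow (by positivity) (by positivity), mul_rpow (by positivity) hq.le,
    mul_rpow h2.le (by positivity), ← rpow_mul zero_le_two, ← rpow_mul hd.le, ← rpow_mul hσ.le,
    mul_div_cancel₀ t hα.ne', show α / 2 * (t / α) = t / 2 by field_simp]

theorem integral_Ioi_rpow_mul_esgtPDF_add {s : ℝ} (hσ : 0 < σ) (hε : ε < 1) (hα : 0 < α)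
    (hq : 0 < q) (hs : -1 < s) (hsq : s < q * α) :
    ∫ y in Ioi 0, y ^ s * esgtPDF θ σ ε α q (θ + y) =
      2 ^ (s / 2 - 1) * q ^ (s / α) * σ ^ s * Gamma ((s + 1) / α) * Gamma (q - s / α) *
        (1 - ε) ^ (s + 1) / (Gamma (1 / α) * Gamma q) := by
  have hd : 0 < 1 - ε := sub_pos.2 hε
  have hsp : (s + 1) / α < (α * q + 1) / α := div_lt_div_of_pos_right (by linarith) hα
  rw [setIntegral_congr_fun measurableSet_Ioi fun y (hy : 0 < y) => by
      rw [esgtPDF_add hy.le, mul_left_comm], integral_const_mul,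
    integral_Ioi_rpow_mul_one_add_rpow_div_rpow hα (esgtScale_pos hσ hq hd) hs hsp,
    esgtScale_rpow_div hσ hα hq hd,
    show (α * q + 1) / α - (s + 1) / α = q - s / α by field_simp; ring]
  have hGα : Gamma (1 / α) ≠ 0 := (Gamma_pos_of_pos (by positivity)).ne'
  have hGq : Gamma q ≠ 0 := (Gamma_pos_of_pos hq).ne'
  have hGqα : Gamma (q + 1 / α) ≠ 0 := (Gamma_pos_of_pos (by positivity)).ne'
  rw [show (2 : ℝ) ^ ((s + 1) / 2) = 2 ^ (s / 2 - 1) * (2 * √2) by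
      rw [sqrt_eq_rpow, ← rpow_one_add' zero_le_two (by positivity), ← rpow_add two_pos]; ring_nf,
    add_div s, rpow_add hq, rpow_add' hσ.le (by linarith), rpow_one, betaFn, betaFn,
    add_comm (1 / α), show s / α + 1 / α + (q - s / α) = q + 1 / α by ring]
  field_simp

end ESGT

theorem esgt_central_moment_general (θ σ ε α q : ℝ) (hσ : 0 < σ) (hε : ε ∈ Set.Ioo (-1 : ℝ) 1)
    (hα : 0 < α) (hq : 0 < q) (r : ℕ) (hre : Even r) (hqr : (r : ℝ) < q * α) :
    ∫ x : ℝ, (x - θ) ^ r * esgtPDF θ σ ε α q x =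
      (2 : ℝ) ^ ((r : ℝ) / 2 - 1) * q ^ ((r : ℝ) / α) * σ ^ r *
        Real.Gamma (((r : ℝ) + 1) / α) * Real.Gamma (q - (r : ℝ) / α) *
        ((1 - ε) ^ (r + 1) + (1 + ε) ^ (r + 1)) / (Real.Gamma (1 / α) * Real.Gamma q) := by
  obtain ⟨hε₁, hε₂⟩ := hε
  set g : ℝ → ℝ := fun y => y ^ r * esgtPDF θ σ ε α q (θ + y)
  have hr : (-1 : ℝ) < r := by linarith [r.cast_nonneg (α := ℝ)]
  have hright : ∫ y in Ioi 0, g y = ∫ y in Ioi 0, y ^ (r : ℝ) * esgtPDF θ σ ε α q (θ + y) := by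
    simp only [g, rpow_natCast]
  have hleft : ∫ y in Ioi 0, g (-y) = ∫ y in Ioi 0, y ^ (r : ℝ) * esgtPDF θ σ (-ε) α q (θ + y) :=
    setIntegral_congr_fun measurableSet_Ioi fun y (hy : 0 < y) => by
      simp only [g, hre.neg_pow, rpow_natCast, ← sub_eq_add_neg, esgtPDF_sub hy.ne']
  rw [integral_Ioi_rpow_mul_esgtPDF_add hσ hε₂ hα hq hr hqr] at hright
  rw [integral_Ioi_rpow_mul_esgtPDF_add hσ (by linarith) hα hq hr hqr, sub_neg_eq_add] at hleft
  have h1ε : 0 < 1 + ε := by linarith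
  have hb : 0 < q - r / α := sub_pos.2 ((div_lt_iff₀ hα).2 hqr)
  -- A non-integrable function has Bochner integral `0`, so positive half-integrals are integrable.
  have hIoi : IntegrableOn g (Ioi 0) := Integrable.of_integral_ne_zero <| by
    rw [hright]; positivity
  have hIic : IntegrableOn g (Iic 0) := Integrable.of_integral_ne_zero <| by
    rw [← neg_zero (G := ℝ), ← integral_comp_neg_Ioi, neg_zero, hleft]; positivity
  calc ∫ x, (x - θ) ^ r * esgtPDF θ σ ε α q x = ∫ y, g y := by
        rw [← integral_add_left_eq_self _ θ]; simp only [g, add_sub_cancel_left]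
    _ = _ := by
        rw [integral_eq_integral_Ioi_add_integral_Ioi_neg hIic hIoi, hright, hleft]
        simp only [← rpow_natCast, Nat.cast_add, Nat.cast_one]
        ring

theorem esgt_central_moment (θ σ ε α q : ℝ) (hσ : 0 < σ) (hε : ε ∈ Set.Ioo (-1 : ℝ) 1)
    (hα : 0 < α) (hq : 0 < q) (r : ℕ) (hr : 0 < r) (hre : Even r) (hqr : (r : ℝ) < q * α) :
    ∫ x : ℝ, (x - θ) ^ r * esgtPDF θ σ ε α q x =
      (2 : ℝ) ^ ((r : ℝ) / 2 - 1) * q ^ ((r : ℝ) / α) * σ ^ r *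
        Real.Gamma (((r : ℝ) + 1) / α) * Real.Gamma (q - (r : ℝ) / α) *
        ((1 - ε) ^ (r + 1) + (1 + ε) ^ (r + 1)) / (Real.Gamma (1 / α) * Real.Gamma q) :=
  esgt_central_moment_general θ σ ε α q hσ hε hα hq r hre hqr
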